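/- arXiv:2104.07745 — 3 statements merged into one kernel-verified Lean document; each statement's English description precedes it below -/
import Mathlib

section
/- Let H1 and H2 be complex Hilbert spaces, let D be a Banach space equipped with a continuous injective linear map j : D → H1, and let A : D → H2 be a continuous linear map. Assume that (1) the range of A is closed in H2, and (2) the image under j of the kernel of A is a closed subset of H1 with respect to the H1-norm. Then D is complete with respect to the graph norm ‖u‖_A = ‖j u‖_{H1} + ‖A u‖_{H2}; equivalently, the unbounded operator from H1 to H2 with domain j(D) determined by A is a closed operator (its graph {(j u, A u) : u ∈ D} is closed in H1 × H2). -/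
/-!
Let `(j uₙ, A uₙ) → (x, y)`. Since `range A` is closed, `y = A w`, and by the open mapping
theorem for `A : D → range A` there are `vₙ → 0` with `A vₙ = A (uₙ - w)`. Then
`uₙ - w - vₙ ∈ ker A` and `j (uₙ - w - vₙ) → x - j w`, so closedness of `j (ker A)` gives
`x - j w = j k` with `A k = 0`, and `(x, y) = (j (w + k), A (w + k))`.
-/

open Set Filter Topology

namespace ContinuousLinearMap

variable {𝕜 E F G : Type*} [NontriviallyNormedField 𝕜]
  [NormedAddCommGroup E] [NormedSpace 𝕜 E] [NormedAddCommGroup F] [NormedSpace 𝕜 F]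
  [NormedAddCommGroup G] [NormedSpace 𝕜 G]

theorem exists_preimage_norm_le_of_isClosed_range [CompleteSpace E] [CompleteSpace F]
    (f : E →L[𝕜] F) (hf : IsClosed (range f)) :
    ∃ C > 0, ∀ y ∈ range f, ∃ x, f x = y ∧ ‖x‖ ≤ C * ‖y‖ := by
  have : CompleteSpace f.range := hf.completeSpace_coe
  obtain ⟨C, hC, hpre⟩ := f.rangeRestrict.exists_preimage_norm_le rangeFactorization_surjective
  refine ⟨C, hC, fun y hy => ?_⟩
  obtain ⟨x, hx, hxy⟩ := hpre ⟨y, hy⟩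
  exact ⟨x, congrArg Subtype.val hx, hxy⟩

theorem exists_tendsto_zero_preimage [CompleteSpace E] [CompleteSpace F]
    (f : E →L[𝕜] F) (hf : IsClosed (range f)) {ι : Type*} {l : Filter ι} {y : ι → F}
    (hy : ∀ i, y i ∈ range f) (hy0 : Tendsto y l (𝓝 0)) :
    ∃ x : ι → E, (∀ i, f (x i) = y i) ∧ Tendsto x l (𝓝 0) := by
  obtain ⟨C, -, hpre⟩ := f.exists_preimage_norm_le_of_isClosed_range hf
  choose x hfx hx using fun i => hpre (y i) (hy i)
  refine ⟨x, hfx, squeeze_zero_norm hx ?_⟩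
  simpa using hy0.norm.const_mul C

theorem isClosed_range_prod_of_isClosed_range_of_isClosed_image_ker [CompleteSpace E]
    [CompleteSpace G] (j : E →L[𝕜] F) (A : E →L[𝕜] G) (hran : IsClosed (range A))
    (hker : IsClosed (j '' (LinearMap.ker (A : E →ₗ[𝕜] G) : Set E))) :
    IsClosed (range (j.prod A)) := by
  refine IsSeqClosed.isClosed fun {p} x hp hx => ?_
  choose u hu using hp
  rw [← funext hu] at hx
  have hju : Tendsto (fun n => j (u n)) atTop (𝓝 x.1) := (continuous_fst.tendsto x).comp hx
  have hAu : Tendsto (fun n => A (u n)) atTop (𝓝 x.2) := (continuous_snd.tendsto x).comp hx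
  obtain ⟨w, hw⟩ : x.2 ∈ range A := hran.mem_of_tendsto hAu (.of_forall fun n => mem_range_self _)
  obtain ⟨v, hAv, hv⟩ := A.exists_tendsto_zero_preimage hran (y := fun n => A (u n - w))
    (fun n => mem_range_self _) (by simpa [hw] using hAu.sub_const (A w))
  obtain ⟨k, hk, hjk⟩ : x.1 - j w ∈ j '' (LinearMap.ker (A : E →ₗ[𝕜] G) : Set E) := by
    refine hker.mem_of_tendsto (f := fun n => j (u n - w - v n)) (b := atTop) ?_
      (.of_forall fun n => ⟨u n - w - v n, by simp [hAv n], rfl⟩)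
    simpa using (hju.sub_const (j w)).sub ((j.continuous.tendsto 0).comp hv)
  refine ⟨w + k, ?_⟩
  ext
  · simp [hjk]
  · simp [hw, show A k = 0 from hk]

end ContinuousLinearMap

theorem stmt0_general
    {H1 H2 D : Type*}
    [NormedAddCommGroup H1] [InnerProductSpace ℂ H1]
    [NormedAddCommGroup H2] [InnerProductSpace ℂ H2] [CompleteSpace H2]
    [NormedAddCommGroup D] [NormedSpace ℂ D] [CompleteSpace D]
    (j : D →L[ℂ] H1)
    (A : D →L[ℂ] H2)
    (hran : IsClosed (Set.range A))
    (hker : IsClosed (j '' (LinearMap.ker (A : D →ₗ[ℂ] H2) : Set D))) :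
    IsClosed {p : H1 × H2 | ∃ u : D, p = (j u, A u)} := by
  convert j.isClosed_range_prod_of_isClosed_range_of_isClosed_image_ker A hran hker using 1
  ext p
  simp [eq_comm]

/-- Proposition (Mendoza): if `A : D → H2` is a continuous linear map from a Banach space `D`
which includes continuously and injectively into a Hilbert space `H1` via `j`, the range of `A`
is closed and `j '' (ker A)` is closed in `H1`, then the unbounded operator in `H1` with domain
`j(D)` determined by `A` is closed, i.e. its graph `{(j u, A u) : u ∈ D}` is closed in
`H1 × H2`. -/
theorem stmt0
    {H1 H2 D : Type*}
    [NormedAddCommGroup H1] [InnerProductSpace ℂ H1] [CompleteSpace H1]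
    [NormedAddCommGroup H2] [InnerProductSpace ℂ H2] [CompleteSpace H2]
    [NormedAddCommGroup D] [NormedSpace ℂ D] [CompleteSpace D]
    (j : D →L[ℂ] H1) (hj : Function.Injective j)
    (A : D →L[ℂ] H2)
    (hran : IsClosed (Set.range A))
    (hker : IsClosed (j '' (LinearMap.ker (A : D →ₗ[ℂ] H2) : Set D))) :
    IsClosed {p : H1 × H2 | ∃ u : D, p = (j u, A u)} :=
  stmt0_general j A hran hker
end

section
/- Let α ∈ ℝ with α ≠ 0. Then there exists a constant c > 0 such that for every Schwartz function u : ℝ → ℂ, ‖u'' + 2 u' − α u‖²_{L²(ℝ)} ≥ c (‖u‖²_{L²(ℝ)} + ‖u'‖²_{L²(ℝ)} + ‖u''‖²_{L²(ℝ)}). In particular, the operator u ↦ u'' + 2u' − αu is bounded below from the H²-norm to the L²-norm on Schwartz functions. -/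
/-!
Integrating by parts, `Re⟨u', u⟩ = Re⟨u'', u'⟩ = 0` and `Re⟨u'', u⟩ = -‖u'‖²` in `L²`, hence
`‖u'' + 2u' - αu‖² = ‖u''‖² + (4 + 2α)‖u'‖² + α²‖u‖²` and, by Cauchy–Schwarz,
`‖u'‖² ≤ ‖u''‖ ‖u‖`. What remains is an inequality of real quadratic forms: for `α ≥ -2` the
middle term can be dropped, while for `α < -2` the bound `‖u'‖² ≤ ‖u''‖ ‖u‖` leaves a form in
`(‖u''‖, ‖u‖)` that is positive definite because `(4 + 2α)² < 4α²`. Finally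
`‖u'‖² ≤ (‖u''‖² + ‖u‖²) / 2` brings the middle norm back.
-/

open MeasureTheory SchwartzMap
open scoped RealInnerProductSpace

theorem exists_pos_mul_sq_add_sq_le {α : ℝ} (hα : α ≠ 0) :
    ∃ m > 0, ∀ a b w : ℝ, 0 ≤ a → 0 ≤ w → b ^ 2 ≤ a * w →
      m * (a ^ 2 + w ^ 2) ≤ a ^ 2 + (4 + 2 * α) * b ^ 2 + α ^ 2 * w ^ 2 := by
  rcases le_or_gt (-2) α with hα2 | hα2
  · refine ⟨min 1 (α ^ 2), by positivity, fun a b w _ _ _ => ?_⟩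
    nlinarith [min_le_left 1 (α ^ 2), min_le_right 1 (α ^ 2), sq_nonneg a, sq_nonneg w,
      sq_nonneg b]
  · refine ⟨1 / (-α - 1), by apply div_pos <;> linarith, fun a b w ha hw hb => ?_⟩
    rw [div_mul_eq_mul_div, one_mul, div_le_iff₀ (by linarith)]
    have hcross : (4 + 2 * α) * (a * w) ≤ (4 + 2 * α) * b ^ 2 :=
      mul_le_mul_of_nonpos_left hb (by linarith)
    -- `(-α - 1)(a² + (4 + 2α)aw + α²w²) - a² - w² = (-α - 2)(a + (α + 1)w)² + (3α² + 5α + 1)w²`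
    nlinarith [mul_nonneg (by linarith : (0 : ℝ) ≤ -α - 2) (sq_nonneg (a + (α + 1) * w)),
      mul_nonneg (by nlinarith : (0 : ℝ) ≤ 3 * α ^ 2 + 5 * α + 1) (sq_nonneg w),
      mul_le_mul_of_nonneg_left hcross (by linarith : (0 : ℝ) ≤ -α - 1)]

theorem exists_pos_mul_sum_sq_le {α : ℝ} (hα : α ≠ 0) :
    ∃ c > 0, ∀ a b w : ℝ, 0 ≤ a → 0 ≤ w → b ^ 2 ≤ a * w →
      c * (w ^ 2 + b ^ 2 + a ^ 2) ≤ a ^ 2 + (4 + 2 * α) * b ^ 2 + α ^ 2 * w ^ 2 := by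
  obtain ⟨m, hm, hmq⟩ := exists_pos_mul_sq_add_sq_le hα
  refine ⟨2 * m / 3, by positivity, fun a b w ha hw hb => ?_⟩
  have hb' : b ^ 2 ≤ (a ^ 2 + w ^ 2) / 2 := by nlinarith [sq_nonneg (a - w)]
  nlinarith [hmq a b w ha hw hb]

section InnerProductSpace

variable {E : Type*} [NormedAddCommGroup E] [InnerProductSpace ℝ E]

theorem norm_add_two_smul_sub_smul_sq {a b w : E} (α : ℝ) (hab : ⟪a, b⟫ = 0) (hbw : ⟪b, w⟫ = 0)
    (haw : ⟪a, w⟫ = -‖b‖ ^ 2) :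
    ‖a + (2 : ℝ) • b - α • w‖ ^ 2 = ‖a‖ ^ 2 + (4 + 2 * α) * ‖b‖ ^ 2 + α ^ 2 * ‖w‖ ^ 2 := by
  have hba : ⟪b, a⟫ = 0 := by rw [real_inner_comm, hab]
  have hwb : ⟪w, b⟫ = 0 := by rw [real_inner_comm, hbw]
  have hwa : ⟪w, a⟫ = -‖b‖ ^ 2 := by rw [real_inner_comm, haw]
  rw [← real_inner_self_eq_norm_sq]
  simp only [inner_add_left, inner_add_right, inner_sub_left, inner_sub_right, real_inner_smul_left,
    real_inner_smul_right, hab, hbw, haw, hba, hwb, hwa, real_inner_self_eq_norm_sq, norm_smul,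
    mul_pow, Real.norm_eq_abs, sq_abs]
  ring

theorem sq_norm_le_norm_mul_norm_of_inner_eq_neg_sq {a b w : E} (haw : ⟪a, w⟫ = -‖b‖ ^ 2) :
    ‖b‖ ^ 2 ≤ ‖a‖ * ‖w‖ := by
  linarith [neg_le_abs ⟪a, w⟫, abs_real_inner_le_norm a w]

end InnerProductSpace

namespace SchwartzMap

variable {V : Type*} [NormedAddCommGroup V] [InnerProductSpace ℝ V]

theorem real_inner_toL2_eq (f g : 𝓢(ℝ, V)) :
    ⟪f.toLp 2, g.toLp 2⟫ = ∫ x, ⟪f x, g x⟫ := by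
  rw [L2.inner_def]
  refine integral_congr_ae ?_
  filter_upwards [f.coeFn_toLp 2, g.coeFn_toLp 2] with x hf hg
  rw [hf, hg]

theorem norm_toL2_sq (f : 𝓢(ℝ, V)) : ‖f.toLp 2‖ ^ 2 = ∫ x, ‖f x‖ ^ 2 := by
  simp only [← real_inner_self_eq_norm_sq, real_inner_toL2_eq]

theorem inner_toL2_derivCLM_left (f g : 𝓢(ℝ, V)) :
    ⟪(derivCLM ℝ V f).toLp 2, g.toLp 2⟫ = -⟪f.toLp 2, (derivCLM ℝ V g).toLp 2⟫ := by
  have h : ∫ x, ⟪f x, deriv g x⟫ = -∫ x, ⟪deriv f x, g x⟫ :=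
    integral_bilinear_deriv_right_eq_neg_left f g (innerSL ℝ)
  simp only [real_inner_toL2_eq, derivCLM_apply, h, neg_neg]

theorem inner_toL2_derivCLM_self (f : 𝓢(ℝ, V)) : ⟪(derivCLM ℝ V f).toLp 2, f.toLp 2⟫ = 0 := by
  linarith [inner_toL2_derivCLM_left f f, real_inner_comm (f.toLp 2) ((derivCLM ℝ V f).toLp 2)]

theorem inner_toL2_derivCLM_derivCLM (f : 𝓢(ℝ, V)) :
    ⟪(derivCLM ℝ V (derivCLM ℝ V f)).toLp 2, f.toLp 2⟫ = -‖(derivCLM ℝ V f).toLp 2‖ ^ 2 := by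
  rw [inner_toL2_derivCLM_left, real_inner_self_eq_norm_sq]

end SchwartzMap

/-- For `α ≠ 0` the operator `u ↦ u'' + 2u' - αu` is bounded below from the `H²`-norm to the
`L²`-norm on Schwartz functions: there is `c > 0` with
`‖u'' + 2u' - αu‖²_{L²} ≥ c (‖u‖²_{L²} + ‖u'‖²_{L²} + ‖u''‖²_{L²})`. -/
theorem stmt7 (α : ℝ) (hα : α ≠ 0) :
    ∃ c : ℝ, 0 < c ∧ ∀ u : SchwartzMap ℝ ℂ,
      c * ((∫ x : ℝ, ‖u x‖ ^ 2) + (∫ x : ℝ, ‖deriv (fun y => u y) x‖ ^ 2) +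
            (∫ x : ℝ, ‖deriv (deriv (fun y => u y)) x‖ ^ 2)) ≤
        ∫ x : ℝ, ‖deriv (deriv (fun y => u y)) x + 2 * deriv (fun y => u y) x
          - (α : ℂ) * u x‖ ^ 2 := by
  obtain ⟨c, hc, hquad⟩ := exists_pos_mul_sum_sq_le hα
  refine ⟨c, hc, fun u => ?_⟩
  set u' := derivCLM ℝ ℂ u
  set u'' := derivCLM ℝ ℂ u'
  have hd : deriv (fun y => u y) = u' := funext fun x => (derivCLM_apply ℝ u x).symm
  have hdd : deriv (deriv (fun y => u y)) = u'' := by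
    rw [hd]; exact funext fun x => (derivCLM_apply ℝ u' x).symm
  have hv : ∀ x, u'' x + 2 * u' x - (α : ℂ) * u x = (u'' + (2 : ℝ) • u' - α • u) x := by
    intro x
    simp only [sub_apply, add_apply, smul_apply, Complex.real_smul, Complex.ofReal_ofNat]
  have hL : (u'' + (2 : ℝ) • u' - α • u).toLp 2 volume =
      u''.toLp 2 volume + (2 : ℝ) • u'.toLp 2 volume - α • u.toLp 2 volume := by
    have h := map_sub (toLpCLM ℝ ℂ 2 volume) (u'' + (2 : ℝ) • u') (α • u)
    rwa [map_add, map_smul, map_smul] at h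
  rw [hdd, hd]
  simp only [hv, ← norm_toL2_sq, hL]
  rw [norm_add_two_smul_sub_smul_sq α (inner_toL2_derivCLM_self u') (inner_toL2_derivCLM_self u)
    (inner_toL2_derivCLM_derivCLM u)]
  exact hquad _ _ _ (norm_nonneg _) (norm_nonneg _)
    (sq_norm_le_norm_mul_norm_of_inner_eq_neg_sq (inner_toL2_derivCLM_derivCLM u))
end

section
/- Let 0 < ε < 1/2 and let r : (0,∞) → ℝ be a smooth function with 0 < r(x) ≤ 1 for all x > 0, r(x) = x for 0 < x ≤ ε, and r(x) = 1 for x ≥ 2ε; set r̃(x) = r(1/x). Then there exists a constant C > 0 such that for every smooth compactly supported function u : (0,∞) → ℂ, writing v = u/(r r̃²) and (x∂_x)w = x w', one has ∫₀^∞ ( |u(x)|² + |x u'(x)|² + |((x∂_x)² u)(x)|² ) dx/x³ ≤ C ∫₀^∞ ( |v(x)|² + |x v'(x)|² + |((x∂_x)² v)(x)|² ) · ( r(x)² / (x³ r̃(x)⁴) ) dx. -/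
open MeasureTheory Set Filter

lemma wBound (ε : ℝ) (hε0 : 0 < ε) (hε : ε < 1 / 2)
    (r : ℝ → ℝ) (hr_smooth : ContDiffOn ℝ (⊤ : ℕ∞) r (Set.Ioi 0))
    (hr_pos : ∀ x > (0 : ℝ), 0 < r x)
    (hr_zero : ∀ x : ℝ, 0 < x → x ≤ ε → r x = x)
    (hr_one : ∀ x : ℝ, 2 * ε ≤ x → r x = 1)
    (w : ℝ → ℝ) (hw : w = fun x => r x * r (1/x)^2)
    (hw_smooth : ContDiffOn ℝ (⊤ : ℕ∞) w (Set.Ioi 0))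
    (hw_pos : ∀ x ∈ Set.Ioi (0:ℝ), 0 < w x) :
    ∃ M : ℝ, 1 ≤ M ∧ ∀ x ∈ Set.Ioi (0:ℝ),
      |x * deriv w x| ≤ M * w x ∧
      |x * deriv (fun y => y * deriv w y) x| ≤ M * w x := by
  -- derivative smoothness
  have hder : ContDiffOn ℝ (⊤ : ℕ∞) (deriv w) (Set.Ioi 0) :=
    hw_smooth.deriv_of_isOpen isOpen_Ioi (by simp)
  have hDw_smooth : ContDiffOn ℝ (⊤ : ℕ∞) (fun y => y * deriv w y) (Set.Ioi 0) :=
    contDiffOn_id.mul hder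
  have hder2 : ContinuousOn (deriv (fun y => y * deriv w y)) (Set.Ioi 0) :=
    hDw_smooth.continuousOn_deriv_of_isOpen isOpen_Ioi (by simp)
  have hεinv : (2:ℝ) ≤ ε⁻¹ := by
    nlinarith [mul_pos (by linarith : (0:ℝ) < 1/2 - ε) (inv_pos.mpr hε0),
      mul_inv_cancel₀ hε0.ne']
  -- small interval facts
  have hsmall : ∀ y ∈ Ioo (0:ℝ) ε, w y = y := by
    intro y hy
    have hy0 := hy.1
    have h1 : r y = y := hr_zero y hy.1 hy.2.le
    have h2 : r (1/y) = 1 := by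
      apply hr_one
      rw [le_div_iff₀ hy0]
      nlinarith [hy.2]
    have h2' : r y⁻¹ = 1 := by rwa [one_div] at h2
    simp [hw, h1, h2']
  have hds : ∀ y ∈ Ioo (0:ℝ) ε, deriv w y = 1 := by
    intro y hy
    have hev : w =ᶠ[nhds y] id :=
      Filter.eventuallyEq_of_mem (isOpen_Ioo.mem_nhds hy) hsmall
    rw [hev.deriv_eq, deriv_id]
  have hd2s : ∀ y ∈ Ioo (0:ℝ) ε, deriv (fun z => z * deriv w z) y = 1 := by
    intro y hy
    have hev : (fun z => z * deriv w z) =ᶠ[nhds y] id := by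
      refine Filter.eventuallyEq_of_mem (isOpen_Ioo.mem_nhds hy) (fun z hz => ?_)
      simp [hds z hz]
    rw [hev.deriv_eq, deriv_id]
  -- large interval facts
  have hlarge : ∀ y ∈ Ioi ε⁻¹, w y = (y⁻¹)^2 := by
    intro y hy
    simp only [mem_Ioi] at hy
    have hy0 : 0 < y := lt_trans (by positivity) hy
    have h1 : r y = 1 := by
      apply hr_one
      calc 2 * ε ≤ 1 := by linarith
        _ ≤ ε⁻¹ := by linarith
        _ ≤ y := hy.le
    have h2 : r (1/y) = 1/y := by
      apply hr_zero _ (by positivity)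
      rw [div_le_iff₀ hy0]
      nlinarith [mul_pos hε0 (sub_pos.mpr hy), mul_inv_cancel₀ hε0.ne']
    simp only [hw, h1, one_mul, one_div] at *
    simp [h2, inv_pow]
  have hdinv2 : ∀ x : ℝ, 0 < x → HasDerivAt (fun y : ℝ => (y⁻¹)^2) (-2 * (x⁻¹)^3) x := by
    intro x hx
    have h := (hasDerivAt_inv hx.ne').fun_pow 2
    refine h.congr_deriv ?_
    norm_num
    ring
  have hdl : ∀ x ∈ Ioi ε⁻¹, deriv w x = -2 * (x⁻¹)^3 := by
    intro x hx
    have hx0 : 0 < x := lt_trans (by positivity) hx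
    have hev : w =ᶠ[nhds x] (fun y => (y⁻¹)^2) :=
      Filter.eventuallyEq_of_mem (isOpen_Ioi.mem_nhds hx) hlarge
    rw [hev.deriv_eq, (hdinv2 x hx0).deriv]
  have hd2l : ∀ x ∈ Ioi ε⁻¹, deriv (fun z => z * deriv w z) x = 4 * (x⁻¹)^3 := by
    intro x hx
    have hx0 : 0 < x := lt_trans (by positivity) hx
    have hev : (fun z => z * deriv w z) =ᶠ[nhds x] (fun y => -2 * (y⁻¹)^2) := by
      refine Filter.eventuallyEq_of_mem (isOpen_Ioi.mem_nhds hx) (fun z hz => ?_)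
      have hz0 : 0 < z := lt_trans (by positivity) hz
      rw [hdl z hz]
      field_simp
    rw [hev.deriv_eq]
    have h : HasDerivAt (fun y : ℝ => -2 * (y⁻¹)^2) (-2 * (-2 * (x⁻¹)^3)) x :=
      (hdinv2 x hx0).const_mul (-2)
    rw [h.deriv]; ring
  -- middle compact set
  have hKsub : Icc ε ε⁻¹ ⊆ Set.Ioi (0:ℝ) := fun x hx => lt_of_lt_of_le hε0 hx.1
  have hKne : (Icc ε ε⁻¹).Nonempty := ⟨ε, le_refl _, by linarith⟩
  obtain ⟨M₁, hM₁⟩ := (isCompact_Icc (a := ε) (b := ε⁻¹)).exists_bound_of_continuousOn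
    ((continuousOn_id.mul hder.continuousOn).mono hKsub)
  obtain ⟨M₂, hM₂⟩ := (isCompact_Icc (a := ε) (b := ε⁻¹)).exists_bound_of_continuousOn
    ((continuousOn_id.mul hder2).mono hKsub)
  obtain ⟨x₀, hx₀K, hx₀min⟩ := (isCompact_Icc (a := ε) (b := ε⁻¹)).exists_isMinOn hKne
    (hw_smooth.continuousOn.mono hKsub)
  set δ := w x₀ with hδ
  have hδ0 : 0 < δ := hw_pos x₀ (hKsub hx₀K)
  set M := max 4 ((max M₁ M₂)/δ) with hM
  have hM4 : (4:ℝ) ≤ M := le_max_left _ _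
  have hM1 : (1:ℝ) ≤ M := by linarith
  refine ⟨M, hM1, fun x hx => ?_⟩
  have hx0 : (0:ℝ) < x := hx
  rcases lt_or_ge x ε with hxs | hx1
  · -- small
    have hxm : x ∈ Ioo (0:ℝ) ε := ⟨hx0, hxs⟩
    have h1 : w x = x := hsmall x hxm
    constructor
    · rw [hds x hxm, mul_one, h1, abs_of_pos hx0]
      nlinarith
    · rw [hd2s x hxm, mul_one, h1, abs_of_pos hx0]
      nlinarith
  rcases le_or_gt x ε⁻¹ with hx2 | hxl
  · -- middle
    have hxm : x ∈ Icc ε ε⁻¹ := ⟨hx1, hx2⟩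
    have hwx : δ ≤ w x := hx₀min hxm
    have hb1 := hM₁ x hxm
    have hb2 := hM₂ x hxm
    simp only [Real.norm_eq_abs, id_eq] at hb1 hb2
    have hMδ : max M₁ M₂ ≤ M * δ := by
      have : (max M₁ M₂)/δ ≤ M := le_max_right _ _
      calc max M₁ M₂ = ((max M₁ M₂)/δ) * δ := by field_simp
        _ ≤ M * δ := by nlinarith
    constructor
    · calc |x * deriv w x| ≤ M₁ := hb1
        _ ≤ max M₁ M₂ := le_max_left _ _
        _ ≤ M * δ := hMδ
        _ ≤ M * w x := by nlinarith
    · calc |x * deriv (fun y => y * deriv w y) x| ≤ M₂ := hb2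
        _ ≤ max M₁ M₂ := le_max_right _ _
        _ ≤ M * δ := hMδ
        _ ≤ M * w x := by nlinarith
  · -- large
    have hxm : x ∈ Ioi ε⁻¹ := hxl
    have h1 : w x = (x⁻¹)^2 := hlarge x hxm
    have hxi : (0:ℝ) < (x⁻¹)^2 := by positivity
    have e0 : x * (x⁻¹)^3 = (x⁻¹)^2 := by
      rw [pow_succ' x⁻¹ 2]
      rw [← mul_assoc, mul_inv_cancel₀ hx0.ne', one_mul]
    constructor
    · rw [hdl x hxm, h1]
      have e1 : x * (-2 * x⁻¹^3) = -2 * (x⁻¹^2) := by rw [show x * (-2 * x⁻¹^3) = -2 * (x * x⁻¹^3) by ring, e0]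
      rw [e1, abs_of_nonpos (by nlinarith), neg_mul, neg_neg]
      nlinarith
    · rw [hd2l x hxm, h1]
      have e1 : x * (4 * x⁻¹^3) = 4 * (x⁻¹^2) := by rw [show x * (4 * x⁻¹^3) = 4 * (x * x⁻¹^3) by ring, e0]
      rw [e1, abs_of_nonneg (by positivity)]
      nlinarith

set_option maxHeartbeats 1000000 in
lemma sqcomb (M a b c W : ℝ) (hM : 1 ≤ M) (ha : 0 ≤ a) (hb : 0 ≤ b) (hc : 0 ≤ c)
    (hW : 0 ≤ W) :
    (a * W)^2 + (W * b + a * (M*W))^2 + (W*c + 2*(M*W)*b + a*(M*W))^2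
      ≤ 9*(1+2*M)^2 * (a^2+b^2+c^2) * W^2 := by
  have hM0 : (0:ℝ) ≤ M := by linarith
  nlinarith [sq_nonneg (W*b - a*(M*W)), sq_nonneg (W*c - 2*(M*W)*b),
    sq_nonneg (W*c - a*(M*W)), sq_nonneg (2*(M*W)*b - a*(M*W)),
    mul_nonneg (mul_nonneg (sub_nonneg.mpr hM) hM0) (mul_nonneg (sq_nonneg W) (sq_nonneg a)),
    mul_nonneg (sub_nonneg.mpr hM) (mul_nonneg (sq_nonneg W) (sq_nonneg a)),
    mul_nonneg (sub_nonneg.mpr hM) (mul_nonneg (sq_nonneg W) (sq_nonneg b)),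
    mul_nonneg (sub_nonneg.mpr hM) (mul_nonneg (sq_nonneg W) (sq_nonneg c)),
    mul_nonneg (mul_nonneg (sub_nonneg.mpr hM) hM0) (mul_nonneg (sq_nonneg W) (sq_nonneg b)),
    mul_nonneg (mul_nonneg (sub_nonneg.mpr hM) hM0) (mul_nonneg (sq_nonneg W) (sq_nonneg c)),
    mul_nonneg (mul_nonneg hM0 hM0) (mul_nonneg (sq_nonneg W) (sq_nonneg a)),
    mul_nonneg (mul_nonneg hM0 hM0) (mul_nonneg (sq_nonneg W) (sq_nonneg b)),
    mul_nonneg (mul_nonneg hM0 hM0) (mul_nonneg (sq_nonneg W) (sq_nonneg c)),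
    mul_nonneg hM0 (mul_nonneg (sq_nonneg W) (sq_nonneg a)),
    mul_nonneg hM0 (mul_nonneg (sq_nonneg W) (sq_nonneg b)),
    mul_nonneg hM0 (mul_nonneg (sq_nonneg W) (sq_nonneg c)),
    mul_nonneg (sq_nonneg W) (sq_nonneg a),
    mul_nonneg (sq_nonneg W) (sq_nonneg b),
    mul_nonneg (sq_nonneg W) (sq_nonneg c)]

lemma normcomb (M W a b c n1 n2 n3 : ℝ) (hM : 1 ≤ M) (hW : 0 ≤ W)
    (ha : 0 ≤ a) (hb : 0 ≤ b) (hc : 0 ≤ c)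
    (h01 : 0 ≤ n1) (h02 : 0 ≤ n2) (h03 : 0 ≤ n3)
    (h1 : n1 ≤ a * W) (h2 : n2 ≤ W * b + a * (M*W))
    (h3 : n3 ≤ W*c + 2*(M*W)*b + a*(M*W)) :
    n1^2 + n2^2 + n3^2 ≤ 9*(1+2*M)^2 * (a^2+b^2+c^2) * W^2 := by
  have q1 : n1^2 ≤ (a*W)^2 := pow_le_pow_left₀ h01 h1 2
  have q2 : n2^2 ≤ (W * b + a * (M*W))^2 := pow_le_pow_left₀ h02 h2 2
  have q3 : n3^2 ≤ (W*c + 2*(M*W)*b + a*(M*W))^2 := pow_le_pow_left₀ h03 h3 2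
  have := sqcomb M a b c W hM ha hb hc hW
  linarith


/-- Continuous embedding of the weighted Sobolev space `r r̃² H²_{V_X}` into
`H²_{x∂ₓ}((0,∞), dx/x³)`: with `r` a defining function for `0` (`r(x) = x` near `0`,
`r(x) = 1` for large `x`, `0 < r ≤ 1`) and `r̃(x) = r(1/x)`, there is `C > 0` such that for
every smooth compactly supported `u : (0,∞) → ℂ`, writing `v = u/(r r̃²)` and `(x∂ₓ)w = xw'`,
`∫₀^∞ (|u|² + |xu'|² + |(x∂ₓ)²u|²) dx/x³
   ≤ C ∫₀^∞ (|v|² + |xv'|² + |(x∂ₓ)²v|²) · r²/(x³ r̃⁴) dx`. -/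
theorem stmt13 (ε : ℝ) (hε0 : 0 < ε) (hε : ε < 1 / 2)
    (r : ℝ → ℝ) (hr_smooth : ContDiffOn ℝ (⊤ : ℕ∞) r (Set.Ioi 0))
    (hr_pos : ∀ x > (0 : ℝ), 0 < r x) (hr_le : ∀ x > (0 : ℝ), r x ≤ 1)
    (hr_zero : ∀ x : ℝ, 0 < x → x ≤ ε → r x = x)
    (hr_one : ∀ x : ℝ, 2 * ε ≤ x → r x = 1) :
    ∃ C : ℝ, 0 < C ∧ ∀ u : ℝ → ℂ, ContDiff ℝ (⊤ : ℕ∞) u → HasCompactSupport u →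
      tsupport u ⊆ Set.Ioi 0 →
      (∫ x in Set.Ioi (0 : ℝ),
          (‖u x‖ ^ 2 + ‖(x : ℂ) * deriv u x‖ ^ 2 +
            ‖(x : ℂ) * deriv (fun y : ℝ => (y : ℂ) * deriv u y) x‖ ^ 2) / x ^ 3) ≤
      C * ∫ x in Set.Ioi (0 : ℝ),
          (‖u x / ((r x * r (1 / x) ^ 2 : ℝ) : ℂ)‖ ^ 2 +
            ‖(x : ℂ) * deriv (fun y => u y / ((r y * r (1 / y) ^ 2 : ℝ) : ℂ)) x‖ ^ 2 +
            ‖(x : ℂ) * deriv (fun y : ℝ => (y : ℂ) *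
                deriv (fun z => u z / ((r z * r (1 / z) ^ 2 : ℝ) : ℂ)) y) x‖ ^ 2) *
            (r x ^ 2 / (x ^ 3 * r (1 / x) ^ 4)) := by
  classical
  set w : ℝ → ℝ := fun x => r x * r (1/x)^2 with hwdef
  have hinvmem : ∀ x ∈ Set.Ioi (0:ℝ), 1/x ∈ Set.Ioi (0:ℝ) := by
    intro x hx; simp only [mem_Ioi] at *; positivity
  have hw_smooth : ContDiffOn ℝ (⊤ : ℕ∞) w (Set.Ioi 0) := by
    have hinv : ContDiffOn ℝ (⊤ : ℕ∞) (fun x : ℝ => 1/x) (Set.Ioi 0) := by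
      simp only [one_div]
      exact contDiffOn_id.inv (fun x hx => ne_of_gt hx)
    exact hr_smooth.mul ((hr_smooth.comp hinv hinvmem).pow 2)
  have hw_pos : ∀ x ∈ Set.Ioi (0:ℝ), 0 < w x := by
    intro x hx
    have h1 := hr_pos x hx
    have h2 := hr_pos (1/x) (hinvmem x hx)
    positivity
  obtain ⟨M, hM1, hMb⟩ := wBound ε hε0 hε r hr_smooth hr_pos hr_zero hr_one w hwdef
    hw_smooth hw_pos
  set C : ℝ := 9 * (1 + 2*M)^2 with hCdef
  have hC0 : 0 < C := by positivity
  refine ⟨C, hC0, ?_⟩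
  intro u hu hcs hsupp
  -- the complex weight and v
  set W : ℝ → ℂ := fun y => ((r y * r (1 / y) ^ 2 : ℝ) : ℂ) with hWdef
  set v : ℝ → ℂ := fun z => u z / W z with hvdef
  have hWw : ∀ y, W y = ((w y : ℝ) : ℂ) := fun y => rfl
  have hWne : ∀ x ∈ Set.Ioi (0:ℝ), W x ≠ 0 := fun x hx =>
    Complex.ofReal_ne_zero.mpr (hw_pos x hx).ne'
  -- smoothness of v and its derivatives on Ioi 0
  have hW_smooth : ContDiffOn ℝ (⊤ : ℕ∞) W (Set.Ioi 0) := by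
    exact Complex.ofRealCLM.contDiff.comp_contDiffOn hw_smooth
  have hv_smooth : ContDiffOn ℝ (⊤ : ℕ∞) v (Set.Ioi 0) := by
    have h := (hu.contDiffOn (s := Set.Ioi 0)).mul (hW_smooth.inv hWne)
    exact h.congr (fun y hy => div_eq_mul_inv (u y) (W y))
  have hdv_smooth : ContDiffOn ℝ (⊤ : ℕ∞) (deriv v) (Set.Ioi 0) :=
    hv_smooth.deriv_of_isOpen isOpen_Ioi (by simp)
  have hdw_smooth : ContDiffOn ℝ (⊤ : ℕ∞) (deriv w) (Set.Ioi 0) :=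
    hw_smooth.deriv_of_isOpen isOpen_Ioi (by simp)
  have hA_smooth : ContDiffOn ℝ (⊤ : ℕ∞) (fun y : ℝ => (y:ℂ) * deriv v y) (Set.Ioi 0) := by
    have h0 : ContDiffOn ℝ (⊤ : ℕ∞) (fun y : ℝ => (y:ℂ)) (Set.Ioi 0) :=
      Complex.ofRealCLM.contDiff.contDiffOn
    exact h0.mul hdv_smooth
  -- pointwise derivative facts
  have hueq : ∀ x ∈ Set.Ioi (0:ℝ), u x = v x * W x := by
    intro y hy
    rw [hvdef]
    exact (div_mul_cancel₀ (u y) (hWne y hy)).symm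
  have h1 : ∀ x ∈ Set.Ioi (0:ℝ),
      deriv u x = deriv v x * W x + v x * ((deriv w x : ℝ) : ℂ) := by
    intro x hx
    have hwda : HasDerivAt w (deriv w x) x :=
      (((hw_smooth.contDiffAt (Ioi_mem_nhds hx)).differentiableAt (by simp))).hasDerivAt
    have hWda : HasDerivAt W ((deriv w x : ℝ) : ℂ) x := hwda.ofReal_comp
    have hud : HasDerivAt u (deriv u x) x := (hu.differentiable (by simp) x).hasDerivAt
    have hvda : DifferentiableAt ℝ v x :=
      ((hv_smooth.contDiffAt (Ioi_mem_nhds hx)).differentiableAt (by simp))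
    have hev : u =ᶠ[nhds x] fun y => v y * W y :=
      Filter.eventuallyEq_of_mem (Ioi_mem_nhds hx) hueq
    rw [hev.deriv_eq]
    exact (hvda.hasDerivAt.mul hWda).deriv
  -- Main pointwise bound
  have hpt : ∀ x ∈ Set.Ioi (0:ℝ),
      (‖u x‖ ^ 2 + ‖(x : ℂ) * deriv u x‖ ^ 2 +
        ‖(x : ℂ) * deriv (fun y : ℝ => (y : ℂ) * deriv u y) x‖ ^ 2) / x ^ 3 ≤
      C * ((‖v x‖ ^ 2 + ‖(x : ℂ) * deriv v x‖ ^ 2 +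
          ‖(x : ℂ) * deriv (fun y : ℝ => (y : ℂ) * deriv v y) x‖ ^ 2) *
          (r x ^ 2 / (x ^ 3 * r (1 / x) ^ 4))) := by
    intro x hx
    have hx0 : (0:ℝ) < x := hx
    have hwx : 0 < w x := hw_pos x hx
    obtain ⟨hMb1, hMb2⟩ := hMb x hx
    have hwda : HasDerivAt w (deriv w x) x :=
      ((hw_smooth.contDiffAt (Ioi_mem_nhds hx)).differentiableAt (by simp)).hasDerivAt
    have hWda : HasDerivAt W ((deriv w x : ℝ) : ℂ) x := hwda.ofReal_comp
    have hvda : HasDerivAt v (deriv v x) x :=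
      ((hv_smooth.contDiffAt (Ioi_mem_nhds hx)).differentiableAt (by simp)).hasDerivAt
    have hdvda : HasDerivAt (deriv v) (deriv (deriv v) x) x :=
      ((hdv_smooth.contDiffAt (Ioi_mem_nhds hx)).differentiableAt (by simp)).hasDerivAt
    have hdwda : HasDerivAt (deriv w) (deriv (deriv w) x) x :=
      ((hdw_smooth.contDiffAt (Ioi_mem_nhds hx)).differentiableAt (by simp)).hasDerivAt
    have hyc : HasDerivAt (fun y : ℝ => (y:ℂ)) 1 x := by
      simpa using (hasDerivAt_id x).ofReal_comp
    have hA : HasDerivAt (fun y : ℝ => (y:ℂ) * deriv v y)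
        (1 * deriv v x + (x:ℂ) * deriv (deriv v) x) x := hyc.mul hdvda
    have hBda : HasDerivAt (fun y : ℝ => ((deriv w y : ℝ) : ℂ))
        ((deriv (deriv w) x : ℝ) : ℂ) x := hdwda.ofReal_comp
    have hB : HasDerivAt (fun y : ℝ => (y:ℂ) * ((deriv w y : ℝ):ℂ))
        (1 * ((deriv w x : ℝ):ℂ) + (x:ℂ) * ((deriv (deriv w) x : ℝ):ℂ)) x := hyc.mul hBda
    have hG : HasDerivAt (fun y : ℝ => W y * ((y:ℂ) * deriv v y) + v y * ((y:ℂ) * ((deriv w y : ℝ):ℂ))) _ x :=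
      (hWda.mul hA).add (hvda.mul hB)
    have hFeq : (fun y : ℝ => (y:ℂ) * deriv u y) =ᶠ[nhds x]
        (fun y : ℝ => W y * ((y:ℂ) * deriv v y) + v y * ((y:ℂ) * ((deriv w y : ℝ):ℂ))) := by
      refine Filter.eventuallyEq_of_mem (Ioi_mem_nhds hx) (fun y hy => ?_)
      rw [h1 y hy]; ring
    have hid : HasDerivAt (fun y : ℝ => y) 1 x := hasDerivAt_id x
    have eDw : deriv (fun y : ℝ => y * deriv w y) x
        = 1 * deriv w x + x * deriv (deriv w) x := (hid.mul hdwda).deriv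
    have eA : deriv (fun y : ℝ => (y:ℂ) * deriv v y) x
        = 1 * deriv v x + (x:ℂ) * deriv (deriv v) x := hA.deriv
    have hD2 : (x:ℂ) * deriv (fun y : ℝ => (y:ℂ) * deriv u y) x
        = W x * ((x:ℂ) * deriv (fun y : ℝ => (y:ℂ) * deriv v y) x)
          + 2 * (((x * deriv w x : ℝ)):ℂ) * ((x:ℂ) * deriv v x)
          + v x * (((x * deriv (fun y : ℝ => y * deriv w y) x : ℝ)):ℂ) := by
      rw [hFeq.deriv_eq, hG.deriv, eA, eDw]
      push_cast
      ring
    have hD1 : (x:ℂ) * deriv u x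
        = W x * ((x:ℂ) * deriv v x) + v x * (((x * deriv w x : ℝ)):ℂ) := by
      rw [h1 x hx]
      push_cast
      ring
    have hnW : ‖W x‖ = w x := by
      rw [hWw x, Complex.norm_real, Real.norm_eq_abs, abs_of_pos hwx]
    have hnDw : ‖(((x * deriv w x : ℝ)):ℂ)‖ ≤ M * w x := by
      rw [Complex.norm_real, Real.norm_eq_abs]; exact hMb1
    have hnD2w : ‖(((x * deriv (fun y : ℝ => y * deriv w y) x : ℝ)):ℂ)‖ ≤ M * w x := by
      rw [Complex.norm_real, Real.norm_eq_abs]; exact hMb2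
    have hn1 : ‖u x‖ ≤ ‖v x‖ * w x := by
      rw [hueq x hx, norm_mul, hnW]
    have hn2 : ‖(x:ℂ) * deriv u x‖ ≤ w x * ‖(x:ℂ) * deriv v x‖ + ‖v x‖ * (M * w x) := by
      rw [hD1]
      refine le_trans (norm_add_le _ _) ?_
      rw [norm_mul (W x), norm_mul (v x), hnW]
      exact add_le_add le_rfl (mul_le_mul_of_nonneg_left hnDw (norm_nonneg _))
    have hn3 : ‖(x:ℂ) * deriv (fun y : ℝ => (y:ℂ) * deriv u y) x‖
        ≤ w x * ‖(x:ℂ) * deriv (fun y : ℝ => (y:ℂ) * deriv v y) x‖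
          + 2 * (M * w x) * ‖(x:ℂ) * deriv v x‖ + ‖v x‖ * (M * w x) := by
      rw [hD2]
      refine le_trans norm_add₃_le ?_
      have e1 : ‖W x * ((x:ℂ) * deriv (fun y : ℝ => (y:ℂ) * deriv v y) x)‖
          = w x * ‖(x:ℂ) * deriv (fun y : ℝ => (y:ℂ) * deriv v y) x‖ := by
        rw [norm_mul (W x), hnW]
      have e2 : ‖2 * (((x * deriv w x : ℝ)):ℂ) * ((x:ℂ) * deriv v x)‖
          ≤ 2 * (M * w x) * ‖(x:ℂ) * deriv v x‖ := by
        rw [norm_mul (2 * _), norm_mul (2:ℂ)]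
        have : ‖(2:ℂ)‖ = 2 := by norm_num
        rw [this]
        have h2 : 2 * ‖(((x * deriv w x : ℝ)):ℂ)‖ ≤ 2 * (M * w x) := by linarith
        exact mul_le_mul_of_nonneg_right h2 (norm_nonneg _)
      have e3 : ‖v x * (((x * deriv (fun y : ℝ => y * deriv w y) x : ℝ)):ℂ)‖
          ≤ ‖v x‖ * (M * w x) := by
        rw [norm_mul (v x)]
        exact mul_le_mul_of_nonneg_left hnD2w (norm_nonneg _)
      linarith [e1.le]
    have hE : ‖u x‖ ^ 2 + ‖(x:ℂ) * deriv u x‖ ^ 2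
        + ‖(x:ℂ) * deriv (fun y : ℝ => (y:ℂ) * deriv u y) x‖ ^ 2
        ≤ C * (‖v x‖^2 + ‖(x:ℂ) * deriv v x‖^2
            + ‖(x:ℂ) * deriv (fun y : ℝ => (y:ℂ) * deriv v y) x‖^2) * (w x)^2 := by
      rw [hCdef]
      exact normcomb M (w x) _ _ _ _ _ _ hM1 hwx.le (norm_nonneg _) (norm_nonneg _)
        (norm_nonneg _) (norm_nonneg _) (norm_nonneg _) (norm_nonneg _) hn1 hn2 hn3
    -- weight comparison
    have hT0 : 0 < r (1/x) := hr_pos _ (hinvmem x hx)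
    have hT1 : r (1/x) ≤ 1 := hr_le _ (hinvmem x hx)
    have hR0 : 0 < r x := hr_pos x hx
    have hfrac : (w x)^2 / x^3 ≤ r x ^ 2 / (x^3 * r (1/x)^4) := by
      rw [div_le_div_iff₀ (by positivity) (by positivity)]
      have hwx_eq : w x = r x * r (1/x)^2 := rfl
      rw [hwx_eq]
      have hT8 : r (1/x)^8 ≤ 1 := pow_le_one₀ hT0.le hT1
      nlinarith [mul_pos (pow_pos hR0 2) (pow_pos hx0 3), hT8,
        mul_nonneg (sub_nonneg.mpr hT8) (mul_pos (pow_pos hR0 2) (pow_pos hx0 3)).le]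
    have hx3 : (0:ℝ) < x ^ 3 := by positivity
    have habc : (0:ℝ) ≤ C * (‖v x‖^2 + ‖(x:ℂ) * deriv v x‖^2
        + ‖(x:ℂ) * deriv (fun y : ℝ => (y:ℂ) * deriv v y) x‖^2) := by positivity
    calc (‖u x‖ ^ 2 + ‖(x:ℂ) * deriv u x‖ ^ 2 +
            ‖(x:ℂ) * deriv (fun y : ℝ => (y:ℂ) * deriv u y) x‖ ^ 2) / x ^ 3
        ≤ (C * (‖v x‖^2 + ‖(x:ℂ) * deriv v x‖^2
            + ‖(x:ℂ) * deriv (fun y : ℝ => (y:ℂ) * deriv v y) x‖^2) * (w x)^2) / x^3 :=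
          (div_le_div_iff_of_pos_right hx3).mpr hE
      _ = (C * (‖v x‖^2 + ‖(x:ℂ) * deriv v x‖^2
            + ‖(x:ℂ) * deriv (fun y : ℝ => (y:ℂ) * deriv v y) x‖^2)) * ((w x)^2 / x^3) := by
          ring
      _ ≤ (C * (‖v x‖^2 + ‖(x:ℂ) * deriv v x‖^2
            + ‖(x:ℂ) * deriv (fun y : ℝ => (y:ℂ) * deriv v y) x‖^2))
            * (r x ^ 2 / (x^3 * r (1/x)^4)) := mul_le_mul_of_nonneg_left hfrac habc
      _ = C * ((‖v x‖^2 + ‖(x:ℂ) * deriv v x‖^2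
            + ‖(x:ℂ) * deriv (fun y : ℝ => (y:ℂ) * deriv v y) x‖^2)
            * (r x ^ 2 / (x^3 * r (1/x)^4))) := by ring
  -- Integrability of the RHS integrand
  have hgi : IntegrableOn (fun x =>
      (‖v x‖ ^ 2 + ‖(x : ℂ) * deriv v x‖ ^ 2 +
        ‖(x : ℂ) * deriv (fun y : ℝ => (y : ℂ) * deriv v y) x‖ ^ 2) *
        (r x ^ 2 / (x ^ 3 * r (1 / x) ^ 4))) (Set.Ioi 0) := by
    have hA_cont : ContinuousOn (deriv (fun y : ℝ => (y:ℂ) * deriv v y)) (Set.Ioi 0) :=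
      hA_smooth.continuousOn_deriv_of_isOpen isOpen_Ioi (by simp)
    have hxC : ContinuousOn (fun x : ℝ => (x:ℂ)) (Set.Ioi 0) :=
      Complex.continuous_ofReal.continuousOn
    have hQcont : ContinuousOn (fun x => ‖v x‖ ^ 2 + ‖(x : ℂ) * deriv v x‖ ^ 2 +
        ‖(x : ℂ) * deriv (fun y : ℝ => (y : ℂ) * deriv v y) x‖ ^ 2) (Set.Ioi 0) :=
      ((hv_smooth.continuousOn.norm.pow 2).add
        (((hxC.mul hdv_smooth.continuousOn).norm).pow 2)).add
        (((hxC.mul hA_cont).norm).pow 2)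
    have hrinv_cont : ContinuousOn (fun x : ℝ => r (1/x)) (Set.Ioi 0) := by
      have hic : ContinuousOn (fun x : ℝ => 1/x) (Set.Ioi 0) := by
        simp only [one_div]
        exact continuousOn_id.inv₀ (fun x hx => ne_of_gt hx)
      exact hr_smooth.continuousOn.comp hic hinvmem
    have hwt_cont : ContinuousOn (fun x : ℝ => r x ^ 2 / (x ^ 3 * r (1 / x) ^ 4))
        (Set.Ioi 0) := by
      apply ContinuousOn.div
      · exact hr_smooth.continuousOn.pow 2
      · exact ((continuous_pow 3).continuousOn.mul (hrinv_cont.pow 4))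
      · intro x hx
        have h1 : (0:ℝ) < x := hx
        have h2 := hr_pos (1/x) (hinvmem x hx)
        positivity
    have hgcont : ContinuousOn (fun x =>
        (‖v x‖ ^ 2 + ‖(x : ℂ) * deriv v x‖ ^ 2 +
          ‖(x : ℂ) * deriv (fun y : ℝ => (y : ℂ) * deriv v y) x‖ ^ 2) *
          (r x ^ 2 / (x ^ 3 * r (1 / x) ^ 4))) (Set.Ioi 0) := hQcont.mul hwt_cont
    have hgz : ∀ x ∈ Set.Ioi (0:ℝ) \ tsupport u,
        (‖v x‖ ^ 2 + ‖(x : ℂ) * deriv v x‖ ^ 2 +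
          ‖(x : ℂ) * deriv (fun y : ℝ => (y : ℂ) * deriv v y) x‖ ^ 2) *
          (r x ^ 2 / (x ^ 3 * r (1 / x) ^ 4)) = 0 := by
      intro x hx
      have huev : u =ᶠ[nhds x] 0 := notMem_tsupport_iff_eventuallyEq.mp hx.2
      have hvev : v =ᶠ[nhds x] (fun _ => (0:ℂ)) := by
        filter_upwards [huev] with y hy
        show u y / W y = 0
        simp only [Pi.zero_apply] at hy
        rw [hy, zero_div]
      have hdvev : deriv v =ᶠ[nhds x] (fun _ => (0:ℂ)) := by
        have h := hvev.deriv
        simpa using h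
      have hAev : (fun y : ℝ => (y:ℂ) * deriv v y) =ᶠ[nhds x] (fun _ => (0:ℂ)) := by
        filter_upwards [hdvev] with y hy
        rw [hy, mul_zero]
      have hdA : deriv (fun y : ℝ => (y:ℂ) * deriv v y) x = 0 := by
        rw [hAev.deriv_eq, deriv_const]
      have hvx : v x = 0 := hvev.self_of_nhds
      have hdvx : deriv v x = 0 := hdvev.self_of_nhds
      rw [hvx, hdvx, hdA]
      simp
    have hKcl : IsClosed (tsupport u) := isClosed_tsupport u
    have h1i : IntegrableOn (fun x =>
        (‖v x‖ ^ 2 + ‖(x : ℂ) * deriv v x‖ ^ 2 +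
          ‖(x : ℂ) * deriv (fun y : ℝ => (y : ℂ) * deriv v y) x‖ ^ 2) *
          (r x ^ 2 / (x ^ 3 * r (1 / x) ^ 4))) (tsupport u) :=
      (hgcont.mono hsupp).integrableOn_compact hcs
    have h2i : IntegrableOn (fun x =>
        (‖v x‖ ^ 2 + ‖(x : ℂ) * deriv v x‖ ^ 2 +
          ‖(x : ℂ) * deriv (fun y : ℝ => (y : ℂ) * deriv v y) x‖ ^ 2) *
          (r x ^ 2 / (x ^ 3 * r (1 / x) ^ 4))) (Set.Ioi 0 \ tsupport u) := by
      rw [integrableOn_congr_fun (fun x hx => hgz x hx)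
        (measurableSet_Ioi.diff hKcl.measurableSet)]
      exact integrableOn_zero
    exact (h2i.union h1i).mono_set (fun x hx => by
      by_cases h : x ∈ tsupport u
      · exact Or.inr h
      · exact Or.inl ⟨hx, h⟩)

  -- Conclusion
  calc (∫ x in Set.Ioi (0 : ℝ),
          (‖u x‖ ^ 2 + ‖(x : ℂ) * deriv u x‖ ^ 2 +
            ‖(x : ℂ) * deriv (fun y : ℝ => (y : ℂ) * deriv u y) x‖ ^ 2) / x ^ 3)
      ≤ ∫ x in Set.Ioi (0 : ℝ), C * ((‖v x‖ ^ 2 + ‖(x : ℂ) * deriv v x‖ ^ 2 +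
          ‖(x : ℂ) * deriv (fun y : ℝ => (y : ℂ) * deriv v y) x‖ ^ 2) *
          (r x ^ 2 / (x ^ 3 * r (1 / x) ^ 4))) := by
        apply integral_mono_of_nonneg
        · filter_upwards [ae_restrict_mem measurableSet_Ioi] with x hx
          have hx3 : (0:ℝ) < x ^ 3 := by
            have : (0:ℝ) < x := hx
            positivity
          positivity
        · exact hgi.const_mul C
        · filter_upwards [ae_restrict_mem measurableSet_Ioi] with x hx
          exact hpt x hx
    _ = C * ∫ x in Set.Ioi (0 : ℝ),
          ((‖v x‖ ^ 2 + ‖(x : ℂ) * deriv v x‖ ^ 2 +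
            ‖(x : ℂ) * deriv (fun y : ℝ => (y : ℂ) * deriv v y) x‖ ^ 2) *
            (r x ^ 2 / (x ^ 3 * r (1 / x) ^ 4))) := integral_const_mul C _
end
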